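/- arXiv:1812.03024 — 2 statements merged into one kernel-verified Lean document; each statement's English description precedes it below -/
import Mathlib

section
/- Let A be a finite set and order A* by the embedding order ≤_e (u ≤_e v iff u is a subsequence of v). Then the set U(A*, ≤_e) of upward closed subsets of A*, partially ordered by set inclusion ⊆, has no antichain; that is, there is no sequence (X_i)_{i∈ℕ} of upward closed subsets of A* such that X_i ⊆ X_j implies i = j. -/
/-!
Choose for each upward closed set `X` a finite basis `F` (its minimal words, finitely many by
Higman's lemma). The complement of `X` is then the language of words avoiding `F`, and splitting
such a word at its first letter that begins a word of `F` shows, by induction on the total length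
of `F`, that it is a finite sum of products of atoms `B*` and `a + ε`. Only finitely many atoms
exist and each contains `ε`, so Higman's lemma, applied once to products and once to sums, makes
the semiring they generate partially well-ordered by inclusion. Hence among any sequence `X i`
there are `i < j` with `(X i)ᶜ ⊆ (X j)ᶜ`, that is `X j ⊆ X i`.
-/

namespace Set.IsPWO

@[to_additive]
theorem submonoid_closure' {M : Type*} [Monoid M] [Preorder M] [MulLeftMono M] [MulRightMono M]
    {s : Set M} (hpos : ∀ x ∈ s, 1 ≤ x) (h : s.IsPWO) : IsPWO (Submonoid.closure s : Set M) := by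
  rw [Submonoid.closure_eq_image_prod]
  refine (h.partiallyWellOrderedOn_sublistForall₂ (· ≤ ·)).image_of_monotone_on ?_
  exact fun l₁ _ l₂ hl₂ h₁₂ => h₁₂.prod_le_prod' fun x hx => hpos x (hl₂ x hx)

end Set.IsPWO

namespace List

variable {α : Type*}

theorem wellQuasiOrdered_sublist [Finite α] :
    WellQuasiOrdered (Sublist : List α → List α → Prop) := by
  intro f
  have hpwo := (Set.finite_univ (α := α)).partiallyWellOrderedOn (r := (· = ·))
    |>.partiallyWellOrderedOn_sublistForall₂ (· = ·)
  obtain ⟨m, n, hmn, hf⟩ := hpwo.exists_lt (f := f) (by simp)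
  obtain ⟨l, hl, hsub⟩ := sublistForall₂_iff.1 hf
  rw [forall₂_eq_eq_eq] at hl
  exact ⟨m, n, hmn, hl ▸ hsub⟩

theorem exists_sublist_basis [Finite α] {X : Set (List α)}
    (hX : ∀ u ∈ X, ∀ v, u <+ v → v ∈ X) : ∃ F : List (List α), ∀ v, v ∈ X ↔ ∃ w ∈ F, w <+ v := by
  set M := {w ∈ X | ∀ v ∈ X, v <+ w → v = w}
  have hM : M.Finite := IsAntichain.finite_of_wellQuasiOrdered
    (fun u hu _ hw hne huw => hne (hw.2 u hu.1 huw)) wellQuasiOrdered_sublist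
  have hbelow : ∀ u ∈ X, ∃ w ∈ M, w <+ u := by
    intro u hu
    obtain ⟨w, ⟨hwX, hwu⟩, hmin⟩ :=
      (measure length).wf.has_min {w | w ∈ X ∧ w <+ u} ⟨u, hu, .refl u⟩
    refine ⟨w, ⟨hwX, fun v hv hvw => hvw.eq_of_length_le ?_⟩, hwu⟩
    exact not_lt.1 (hmin v ⟨hv, hvw.trans hwu⟩)
  refine ⟨hM.toFinset.toList, fun v => ⟨fun hv => ?_, ?_⟩⟩
  · simpa using hbelow v hv
  · simp only [Finset.mem_toList, Set.Finite.mem_toFinset]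
    exact fun ⟨w, hw, hwv⟩ => hX w hw.1 v hwv

variable [DecidableEq α]

def stripHead (c : α) : List α → List α
  | [] => []
  | d :: w => if d = c then w else d :: w

theorem sublist_cons_iff_stripHead {c : α} {w v : List α} : w <+ c :: v ↔ stripHead c w <+ v := by
  cases w with
  | nil => simp [stripHead]
  | cons d w =>
    by_cases hdc : d = c
    · simp [stripHead, hdc]
    · simp [stripHead, hdc, sublist_cons_iff]

theorem stripHead_of_head?_ne {c : α} {w : List α} (h : w.head? ≠ some c) :
    stripHead c w = w := by
  cases w with
  | nil => rfl
  | cons d w => simp_all [stripHead]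

theorem length_stripHead_le (c : α) (w : List α) : (stripHead c w).length ≤ w.length := by
  cases w with
  | nil => rfl
  | cons d w => by_cases d = c <;> simp_all [stripHead]

theorem length_stripHead_lt {c : α} {w : List α} (h : w.head? = some c) :
    (stripHead c w).length < w.length := by
  cases w with
  | nil => simp at h
  | cons d w => simp_all [stripHead]

end List

namespace Language

open List

variable {α : Type*}

theorem mem_sum_map {ι : Type*} {l : List ι} {f : ι → Language α} {x : List α} :
    x ∈ (l.map f).sum ↔ ∃ i ∈ l, x ∈ f i := by
  induction l with
  | nil => simp [notMem_zero]
  | cons i l ih => simp [mem_add, ih]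

def wordsOver (B : Set α) : Language α := {w | ∀ c ∈ w, c ∈ B}

def atoms (α : Type*) : Set (Language α) := Set.range wordsOver ∪ Set.range fun a : α => 1 + {[a]}

theorem one_le_of_mem_atoms {L : Language α} (hL : L ∈ atoms α) : 1 ≤ L := by
  rcases hL with ⟨B, rfl⟩ | ⟨a, rfl⟩
  · rintro _ rfl
    simp [wordsOver]
  · exact le_self_add

theorem isPWO_closure_atoms [Finite α] :
    (Subsemiring.closure (atoms α) : Set (Language α)).IsPWO := by
  rw [Subsemiring.coe_closure_eq]
  have hatoms : (atoms α).IsPWO := ((Set.finite_range _).union (Set.finite_range _)).isPWO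
  exact (hatoms.submonoid_closure' fun _ => one_le_of_mem_atoms).addSubmonoid_closure'
    fun _ _ => zero_le

def avoiding (F : List (List α)) : Language α := {v | ∀ w ∈ F, ¬ w <+ v}

theorem mem_avoiding {F : List (List α)} {v : List α} : v ∈ avoiding F ↔ ∀ w ∈ F, ¬ w <+ v :=
  Iff.rfl

theorem mem_avoiding_of_sublist {F : List (List α)} {u v : List α} (huv : u <+ v)
    (hv : v ∈ avoiding F) : u ∈ avoiding F :=
  fun w hw hwu => hv w hw (hwu.trans huv)

theorem avoiding_eq_compl {F : List (List α)} {X : Set (List α)}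
    (hF : ∀ v, v ∈ X ↔ ∃ w ∈ F, w <+ v) : (avoiding F : Set (List α)) = Xᶜ :=
  Set.ext fun v => show (∀ w ∈ F, ¬ w <+ v) ↔ v ∉ X by simp [hF]

theorem avoiding_eq_zero {F : List (List α)} (h : [] ∈ F) : avoiding F = 0 :=
  Set.eq_empty_of_forall_notMem fun v hv => hv [] h (nil_sublist v)

variable [DecidableEq α]

theorem cons_mem_avoiding {F : List (List α)} {c : α} {v : List α} :
    c :: v ∈ avoiding F ↔ v ∈ avoiding (F.map (stripHead c)) := by
  simp [mem_avoiding, sublist_cons_iff_stripHead]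

theorem map_stripHead_eq_self {F : List (List α)} {c : α} (h : ∀ w ∈ F, w.head? ≠ some c) :
    F.map (stripHead c) = F := by
  conv_rhs => rw [← List.map_id F]
  exact map_congr_left fun w hw => stripHead_of_head?_ne (h w hw)

theorem sum_length_map_stripHead_lt {F : List (List α)} {c : α} (hc : c ∈ F.filterMap head?) :
    ((F.map (stripHead c)).map length).sum < (F.map length).sum := by
  obtain ⟨w, hw, hwc⟩ := mem_filterMap.1 hc
  rw [List.map_map]
  exact sum_lt_sum _ _ (fun w _ => length_stripHead_le c w) ⟨w, hw, length_stripHead_lt hwc⟩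

theorem avoiding_eq {F : List (List α)} (hF : [] ∉ F) :
    avoiding F = wordsOver {c | ∀ w ∈ F, w.head? ≠ some c} *
      (1 + ((F.filterMap head?).map fun c =>
        (1 + {[c]}) * avoiding (F.map (stripHead c))).sum) := by
  ext v
  rw [mem_mul]
  constructor
  · intro hv
    induction v with
    | nil => exact ⟨[], fun _ => by simp, [], Or.inl rfl, rfl⟩
    | cons c v ih =>
      by_cases hc : ∀ w ∈ F, w.head? ≠ some c
      · have hv' : v ∈ avoiding F := by
          rwa [cons_mem_avoiding, map_stripHead_eq_self hc] at hv
        obtain ⟨x, hx, y, hy, rfl⟩ := ih hv'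
        refine ⟨c :: x, ?_, y, hy, rfl⟩
        exact forall_mem_cons.2 ⟨hc, hx⟩
      · push Not at hc
        refine ⟨[], fun _ => by simp, c :: v, Or.inr (mem_sum_map.2 ⟨c, ?_, ?_⟩), rfl⟩
        · exact mem_filterMap.2 hc
        · exact ⟨[c], Or.inr rfl, v, cons_mem_avoiding.1 hv, rfl⟩
  · rintro ⟨x, hx, y, hy, rfl⟩
    have hy : y ∈ avoiding F := by
      rcases hy with rfl | hy
      · exact fun w hw hwy => hF (sublist_nil.1 hwy ▸ hw)
      obtain ⟨c, -, p, hp, z, hz, rfl⟩ := mem_sum_map.1 hy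
      rcases hp with rfl | rfl
      · exact mem_avoiding_of_sublist (sublist_cons_self c z) (cons_mem_avoiding.2 hz)
      · exact cons_mem_avoiding.2 hz
    induction x with
    | nil => exact hy
    | cons b x ih =>
      have hb : ∀ w ∈ F, w.head? ≠ some b := hx b mem_cons_self
      rw [cons_append, cons_mem_avoiding, map_stripHead_eq_self hb]
      exact ih fun c hc => hx c (mem_cons_of_mem b hc)

theorem avoiding_mem_closure_atoms (F : List (List α)) :
    avoiding F ∈ Subsemiring.closure (atoms α) := by
  induction h : (F.map length).sum using Nat.strong_induction_on generalizing F with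
  | _ n ih =>
    by_cases hnil : [] ∈ F
    · rw [avoiding_eq_zero hnil]
      exact zero_mem _
    rw [avoiding_eq hnil]
    refine mul_mem (Subsemiring.subset_closure (Or.inl ⟨_, rfl⟩))
      (add_mem (one_mem _) (list_sum_mem ?_))
    simp only [mem_map]
    rintro _ ⟨c, hc, rfl⟩
    exact mul_mem (Subsemiring.subset_closure (Or.inr ⟨c, rfl⟩))
      (ih _ (h ▸ sum_length_map_stripHead_lt hc) _ rfl)

end Language

/-- Theorem 2(2), second part: the upward closed subsets of `(A*, ≤ₑ)` (embedding order,
i.e. the sublist order), ordered by inclusion, have no antichain. -/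
theorem stmt_5 (A : Type*) [Fintype A] :
    ¬ ∃ X : ℕ → Set (List A),
      (∀ i : ℕ, ∀ u ∈ X i, ∀ v : List A, u.Sublist v → v ∈ X i) ∧
      (∀ i j : ℕ, X i ⊆ X j → i = j) := by
  classical
  rintro ⟨X, hup, hanti⟩
  choose F hF using fun i => List.exists_sublist_basis (hup i)
  obtain ⟨i, j, hij, hle⟩ := Language.isPWO_closure_atoms.exists_lt
    fun i => Language.avoiding_mem_closure_atoms (F i)
  have hcompl : (X i)ᶜ ⊆ (X j)ᶜ := by
    rwa [← Language.avoiding_eq_compl (hF i), ← Language.avoiding_eq_compl (hF j)]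
  exact hij.ne' (hanti j i (Set.compl_subset_compl.1 hcompl))
end

section
/- Let A be a finite set, let B := (A × {0}) ∪ (A × {1}), and define φ : A* → B* by φ(a_1,…,a_n) := (b_1,…,b_n) where b_i := (a_i, 0) if a_i ∉ {a_1,…,a_{i−1}} and b_i := (a_i, 1) otherwise. For u ∈ A*, let S(u) denote the set of letters occurring in u. Define u ≤_E v iff φ(u) ≤_e φ(v) and S(u) = S(v). Then (A*, ≤_E) has no descending chain and no antichain. -/
/-- The word `φ(u)` obtained from `u` by marking each letter with `0` at its first
occurrence and with `1` at every repeated occurrence; `seen` is the set of letters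
occurring before the current position. -/
def phiAux {A : Type*} [DecidableEq A] : List A → List A → List (A × Fin 2)
  | _, [] => []
  | seen, a :: u => (a, if a ∈ seen then (1 : Fin 2) else 0) :: phiAux (a :: seen) u

def phi {A : Type*} [DecidableEq A] (u : List A) : List (A × Fin 2) :=
  phiAux [] u

/-- `u ≤_E v` iff `φ(u)` embeds into `φ(v)` (as a subsequence) and `u`, `v` have the
same set of letters. -/
def leE {A : Type*} [DecidableEq A] (u v : List A) : Prop :=
  (phi u).Sublist (phi v) ∧ ∀ a : A, a ∈ u ↔ a ∈ v

/-! A strict `≤_E`-step strictly shortens the word, since `φ` preserves length and is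
injective; hence there is no descending chain. By Higman's lemma the subsequence order on
words over the finite alphabet `A × Fin 2` is a well quasi-order, and there are only finitely
many letter sets `S(u)`, so `≤_E` is a well quasi-order and has no infinite antichain. -/

theorem List.wellQuasiOrdered_sublist_s6 (α : Type*) [Finite α] :
    WellQuasiOrdered (List.Sublist : List α → List α → Prop) := by
  have higman := (Set.finite_univ (α := α)).partiallyWellOrderedOn (r := (· = ·))
    |>.partiallyWellOrderedOn_sublistForall₂ (· = ·)
  intro f
  obtain ⟨m, n, hmn, h⟩ := higman fun n => ⟨f n, fun _ _ => Set.mem_univ _⟩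
  obtain ⟨l, hl, hsub⟩ := List.sublistForall₂_iff.1 h
  rw [List.forall₂_eq_eq_eq] at hl
  subst hl
  exact ⟨m, n, hmn, hsub⟩

section Phi

variable {A : Type*} [DecidableEq A]

theorem map_fst_phiAux : ∀ seen u : List A, (phiAux seen u).map Prod.fst = u
  | _, [] => rfl
  | seen, a :: u => by simp [phiAux, map_fst_phiAux (a :: seen) u]

theorem map_fst_phi (u : List A) : (phi u).map Prod.fst = u :=
  map_fst_phiAux [] u

theorem phi_injective : Function.Injective (phi (A := A)) :=
  Function.LeftInverse.injective map_fst_phi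

theorem length_phi_lt_of_leE {u v : List A} (h : leE u v) (hne : u ≠ v) :
    (phi u).length < (phi v).length :=
  h.1.length_le.lt_of_ne fun hlen => hne (phi_injective (h.1.eq_of_length hlen))

theorem wellFounded_leE_ne : WellFounded fun u v : List A => leE u v ∧ u ≠ v :=
  Subrelation.wf (fun h => length_phi_lt_of_leE h.1 h.2) (measure fun u => (phi u).length).wf

theorem wellQuasiOrdered_leE [Finite A] : WellQuasiOrdered (leE : List A → List A → Prop) := by
  intro f
  obtain ⟨m, n, hmn, hset, hsub⟩ :=
    ((Finite.wellQuasiOrdered (· = ·)).prod (List.wellQuasiOrdered_sublist_s6 _))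
      fun n => ((f n).toFinset, phi (f n))
  refine ⟨m, n, hmn, hsub, fun a => ?_⟩
  simpa using Finset.ext_iff.1 hset a

end Phi

/-- Theorem 3(1): for a finite alphabet `A`, `(A*, ≤_E)` has no descending chain and
no antichain. -/
theorem stmt_6 (A : Type*) [Fintype A] [DecidableEq A] :
    (¬ ∃ a : ℕ → List A, ∀ i : ℕ, leE (a (i + 1)) (a i) ∧ a (i + 1) ≠ a i) ∧
    (¬ ∃ a : ℕ → List A, ∀ i j : ℕ, leE (a i) (a j) → i = j) := by
  constructor
  · rintro ⟨a, ha⟩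
    exact (wellFounded_iff_isEmpty_descending_chain.1 wellFounded_leE_ne).elim ⟨a, ha⟩
  · rintro ⟨a, ha⟩
    obtain ⟨i, j, hij, hle⟩ := wellQuasiOrdered_leE a
    exact hij.ne (ha i j hle)
end
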